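/- Let additionally B be a symmetric ℂ-bilinear form on U with B(v_{12}, v_{34}) = 0 and B(v_{13}, v_{24}) = 0, and assume ω_{134} ≠ ω_{234}. Then ω_{123} ω_{124} B(v_{12}, v_{12}) + ω_{134} ω_{234} B(v_{34}, v_{34}) = 0. -/

import Mathlib

/-!
Eliminating `v₁₄, v₂₄, v₃₄` with the first three vertex relations turns `∑ ν_{ij} v_{ij} = 0` into
`ω₁₂₄ v₁₂ + ω₁₃₄ v₁₃ + ω₂₃₄ v₂₃ = 0`, with `v₃₄ = v₁₃ + v₂₃`. By symmetry of `B` the two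
orthogonality conditions give `t := B(v₁₂, v₁₃) = B(v₁₃, v₂₃) = -B(v₁₂, v₂₃)`, so pairing the
relation with `v₁₂`, `v₁₃`, `v₂₃` expresses the three weighted norms through `t`. Since `ω` is a
cocycle, `ω₁₂₃ = ω₁₂₄ - ω₁₃₄ + ω₂₃₄`, and the coefficient of `t` in the claimed combination
vanishes identically.
-/

namespace LinearMap.BilinForm

variable {R M : Type*} [CommRing R] [AddCommGroup M] [Module R M]

theorem norm_relation_of_smul_add_smul_add_smul {B : LinearMap.BilinForm R M} (hB : B.IsSymm)
    {a b c : R} {x y z : M} (hrel : a • x + b • y + c • z = 0)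
    (hxy : B x (y + z) = 0) (hyx : B y (x - z) = 0) :
    (a - b + c) * a * B x x + b * c * B (y + z) (y + z) = 0 := by
  have pair (w : M) : a * B x w + b * B y w + c * B z w = 0 := by
    simpa using congrArg (B · w) hrel
  have hx := pair x
  have hy := pair y
  have hz := pair z
  simp only [map_add, map_sub, LinearMap.add_apply, hB.eq y x, hB.eq z x, hB.eq z y]
    at hx hy hz hxy hyx ⊢
  linear_combination (a - b + c) * hx + c * hy + b * hz
    - ((a - b + c) * c + a * b) * hxy + (b - c) ^ 2 * hyx

end LinearMap.BilinForm

theorem norm_relation_of_opposite_edges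
    (U : Type*) [AddCommGroup U] [Module ℂ U]
    (ν12 ν13 ν14 ν23 ν24 ν34 ω123 ω124 ω134 ω234 : ℂ)
    (hω123 : ω123 = ν23 - ν13 + ν12) (hω124 : ω124 = ν24 - ν14 + ν12)
    (hω134 : ω134 = ν34 - ν14 + ν13) (hω234 : ω234 = ν34 - ν24 + ν23)
    (v12 v13 v14 v23 v24 v34 : U)
    (h1 : v12 + v13 + v14 = 0) (h2 : -v12 + v23 + v24 = 0)
    (h3 : -v13 - v23 + v34 = 0)
    (h5 : ν12 • v12 + ν13 • v13 + ν14 • v14 + ν23 • v23 + ν24 • v24 + ν34 • v34 = 0)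
    (B : U →ₗ[ℂ] U →ₗ[ℂ] ℂ) (hsym : ∀ u v, B u v = B v u)
    (horth1 : B v12 v34 = 0) (horth2 : B v13 v24 = 0) :
    ω123 * ω124 * B v12 v12 + ω134 * ω234 * B v34 v34 = 0 := by
  have hrel : ω124 • v12 + ω134 • v13 + ω234 • v23 = 0 := by
    subst hω124 hω134 hω234
    linear_combination (norm := module) h5 - ν14 • h1 - ν24 • h2 - ν34 • h3
  have hv34 : v34 = v13 + v23 := by linear_combination (norm := module) h3
  have hv24 : v24 = v12 - v23 := by linear_combination (norm := module) h2
  subst hv34 hv24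
  have hcocycle : ω123 = ω124 - ω134 + ω234 := by rw [hω123, hω124, hω134, hω234]; ring
  rw [hcocycle]
  exact LinearMap.BilinForm.norm_relation_of_smul_add_smul_add_smul ⟨hsym⟩ hrel horth1 horth2
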